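/- Let C₁ > 0 and C₂ > 0, and define ξ_p, ψ, r as in the JKD setting. Then the first moment of the representing measure dλ^D = ψ(u)du + r·δ_{ξ_p} equals C₂² + C₁C₂/2; that is, ∫₀^{C₁} u ψ(u) du + r·ξ_p = C₂² + C₁C₂/2. -/

import Mathlib

/-- The pole location ξ_p of the JKD function R^D. -/
noncomputable def xip (C₁ C₂ : ℝ) : ℝ := (C₁ + Real.sqrt (C₁ ^ 2 + 4 * C₂ ^ 2)) / 2

/-- The density ψ of the absolutely continuous part of the JKD representing measure. -/
noncomputable def psi (C₁ C₂ u : ℝ) : ℝ :=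
  C₂ * Real.sqrt (u * (C₁ - u)) / (Real.pi * (C₂ ^ 2 + u * (C₁ - u)))

/-- The strength r of the Dirac mass at ξ_p. -/
noncomputable def rres (C₁ C₂ : ℝ) : ℝ :=
  2 * C₂ * Real.sqrt (xip C₁ C₂ * (xip C₁ C₂ - C₁)) / (2 * xip C₁ C₂ - C₁)

/-!
The density `ψ` is symmetric about `C₁ / 2`, so `∫₀^{C₁} u ψ(u) du = (C₁ / 2) ∫₀^{C₁} ψ`. Splitting
`√w / (C₂² + w) = 1 / √w - C₂² / (√w (C₂² + w))` with `w = u (C₁ - u)` gives the primitive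
`(C₂ / π) (arcsin ((2u - C₁) / C₁) + (2C₂ / s) arctan (C₂ (C₁ - 2u) / (s √w)))` of `ψ`, where
`s = √(C₁² + 4C₂²) = 2ξ_p - C₁`; its one-sided limits at the endpoints give
`∫₀^{C₁} ψ = C₂ - 2C₂² / s`. On the other side `ξ_p (ξ_p - C₁) = C₂²`, so `r = 2C₂² / s`, and the
two contributions add up to `C₂² + C₁C₂ / 2`.
-/

open Real Filter Set Topology MeasureTheory

theorem integral_id_mul_of_symmetric {f : ℝ → ℝ} {a b : ℝ}
    (hf : ∀ x, f (a + b - x) = f x) (hint : IntervalIntegrable f volume a b) :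
    ∫ x in a..b, x * f x = (a + b) / 2 * ∫ x in a..b, f x := by
  have hid : IntervalIntegrable (fun x => x * f x) volume a b :=
    hint.continuousOn_mul continuousOn_id
  have hreflect : ∫ x in a..b, (a + b - x) * f x = ∫ x in a..b, x * f x := by
    have := intervalIntegral.integral_comp_sub_left (fun x => x * f x) (a + b) (a := a) (b := b)
    simpa only [hf, add_sub_cancel_right, add_sub_cancel_left] using this
  have hsplit : ∫ x in a..b, (a + b - x) * f x
      = (a + b) * (∫ x in a..b, f x) - ∫ x in a..b, x * f x := by
    simp_rw [sub_mul]
    rw [intervalIntegral.integral_sub (hint.const_mul _) hid, intervalIntegral.integral_const_mul]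
  linarith

theorem hasDerivAt_sqrt_mul_sub {c x : ℝ} (hx : x ∈ Ioo 0 c) :
    HasDerivAt (fun u => √(u * (c - u))) ((c - 2 * x) / (2 * √(x * (c - x)))) x := by
  have hw : x * (c - x) ≠ 0 := (mul_pos hx.1 (sub_pos.2 hx.2)).ne'
  have hpoly : HasDerivAt (fun u : ℝ => u * (c - u)) (c - 2 * x) x :=
    ((hasDerivAt_id' x).mul ((hasDerivAt_id' x).const_sub c)).congr_deriv (by ring)
  exact ((hasDerivAt_sqrt hw).comp x hpoly).congr_deriv (by ring)

theorem hasDerivAt_arcsin_two_mul_sub_div {c x : ℝ} (hx : x ∈ Ioo 0 c) :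
    HasDerivAt (fun u => arcsin ((2 * u - c) / c)) (√(x * (c - x)))⁻¹ x := by
  obtain ⟨hx0, hxc⟩ := hx
  have hc : 0 < c := hx0.trans hxc
  have hlin : HasDerivAt (fun u : ℝ => (2 * u - c) / c) (2 / c) x :=
    ((((hasDerivAt_id' x).const_mul 2).sub_const c).div_const c).congr_deriv (by ring)
  have hne_neg_one : (2 * x - c) / c ≠ -1 := by
    rw [ne_eq, div_eq_iff hc.ne']; linarith
  have hne_one : (2 * x - c) / c ≠ 1 := by
    rw [ne_eq, div_eq_iff hc.ne']; linarith
  have hsqrt : √(1 - ((2 * x - c) / c) ^ 2) = 2 * √(x * (c - x)) / c := by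
    rw [← sqrt_sq (by positivity : 0 ≤ 2 * √(x * (c - x)) / c), div_pow (2 * _), mul_pow,
      sq_sqrt (mul_pos hx0 (sub_pos.2 hxc)).le]
    congr 1
    field_simp
    ring
  refine ((hasDerivAt_arcsin hne_neg_one hne_one).comp x hlin).congr_deriv ?_
  rw [hsqrt]
  field_simp

theorem hasDerivAt_arctan_mul_inv_sqrt {C₁ C₂ s x : ℝ} (hs : s ^ 2 = C₁ ^ 2 + 4 * C₂ ^ 2)
    (hx : x ∈ Ioo 0 C₁) :
    HasDerivAt (fun u => arctan (C₂ * (C₁ - 2 * u) / s * (√(u * (C₁ - u)))⁻¹))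
      (-(C₂ * s) / (2 * √(x * (C₁ - x)) * (C₂ ^ 2 + x * (C₁ - x)))) x := by
  have hw : 0 < x * (C₁ - x) := mul_pos hx.1 (sub_pos.2 hx.2)
  set W := √(x * (C₁ - x)) with hW_def
  have hW : 0 < W := sqrt_pos.2 hw
  have hW2 : W ^ 2 = x * (C₁ - x) := sq_sqrt hw.le
  have hs0 : s ≠ 0 := by
    rintro rfl
    nlinarith [hx.1.trans hx.2]
  have hlin : HasDerivAt (fun u : ℝ => C₂ * (C₁ - 2 * u) / s) (-2 * C₂ / s) x :=
    ((((hasDerivAt_id' x).const_mul 2).const_sub C₁).const_mul C₂ |>.div_const s).congr_deriv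
      (by ring)
  have hv := hlin.mul ((hasDerivAt_sqrt_mul_sub hx).inv hW.ne')
  -- `1 + v²` collapses because `s² W² + C₂² (C₁ - 2x)² = C₁² (C₂² + W²)`
  refine ((hasDerivAt_arctan _).comp x hv).congr_deriv ?_
  simp only [Pi.mul_apply, Pi.inv_apply]
  rw [← hW_def, ← hW2]
  field_simp
  linear_combination (C₂ * W ^ 2) * hs - (4 * C₂ * W ^ 2) * hW2

noncomputable def sqrtDisc (C₁ C₂ : ℝ) : ℝ := √(C₁ ^ 2 + 4 * C₂ ^ 2)

theorem sq_sqrtDisc (C₁ C₂ : ℝ) : sqrtDisc C₁ C₂ ^ 2 = C₁ ^ 2 + 4 * C₂ ^ 2 :=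
  sq_sqrt (by positivity)

theorem sqrtDisc_pos {C₁ C₂ : ℝ} (hC₂ : C₂ ≠ 0) : 0 < sqrtDisc C₁ C₂ := by
  unfold sqrtDisc; positivity

theorem xip_eq (C₁ C₂ : ℝ) : xip C₁ C₂ = (C₁ + sqrtDisc C₁ C₂) / 2 := rfl

theorem rres_eq {C₁ C₂ : ℝ} (hC₂ : 0 ≤ C₂) : rres C₁ C₂ = 2 * C₂ ^ 2 / sqrtDisc C₁ C₂ := by
  have hprod : xip C₁ C₂ * (xip C₁ C₂ - C₁) = C₂ ^ 2 := by
    rw [xip_eq]; linear_combination sq_sqrtDisc C₁ C₂ / 4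
  rw [rres, hprod, sqrt_sq hC₂, xip_eq]
  congr 1 <;> ring

theorem psi_sub (C₁ C₂ u : ℝ) : psi C₁ C₂ (C₁ - u) = psi C₁ C₂ u := by
  rw [psi, psi, sub_sub_cancel, mul_comm (C₁ - u)]

theorem intervalIntegrable_psi {C₁ C₂ : ℝ} (hC₂ : C₂ ≠ 0) :
    IntervalIntegrable (psi C₁ C₂) volume 0 C₁ := by
  refine ContinuousOn.intervalIntegrable (ContinuousOn.div (by fun_prop) (by fun_prop) ?_)
  intro u hu
  have : 0 ≤ u * (C₁ - u) := by
    rcases le_total 0 C₁ with h | h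
    · rw [uIcc_of_le h] at hu; exact mul_nonneg hu.1 (by linarith [hu.2])
    · rw [uIcc_of_ge h] at hu; exact mul_nonneg_of_nonpos_of_nonpos hu.2 (by linarith [hu.1])
  positivity

/-- At `u = 0` and `u = C₁` the arctan argument is a junk value (`0⁻¹ = 0`); only the one-sided
limits there are used. -/
noncomputable def psiPrimitive (C₁ C₂ u : ℝ) : ℝ :=
  C₂ / π * (arcsin ((2 * u - C₁) / C₁) + 2 * C₂ / sqrtDisc C₁ C₂ *
    arctan (C₂ * (C₁ - 2 * u) / sqrtDisc C₁ C₂ * (√(u * (C₁ - u)))⁻¹))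

theorem hasDerivAt_psiPrimitive {C₁ C₂ x : ℝ} (hx : x ∈ Ioo 0 C₁) :
    HasDerivAt (psiPrimitive C₁ C₂) (psi C₁ C₂ x) x := by
  have hw : 0 < x * (C₁ - x) := mul_pos hx.1 (sub_pos.2 hx.2)
  have hs : sqrtDisc C₁ C₂ ≠ 0 := by
    unfold sqrtDisc; have := hx.1.trans hx.2; positivity
  refine (((hasDerivAt_arcsin_two_mul_sub_div hx).add
    ((hasDerivAt_arctan_mul_inv_sqrt (sq_sqrtDisc C₁ C₂) hx).const_mul
      (2 * C₂ / sqrtDisc C₁ C₂))).const_mul (C₂ / π)).congr_deriv ?_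
  rw [psi]
  field_simp
  rw [sq_sqrt hw.le]
  ring

theorem psiPrimitive_sub (C₁ C₂ u : ℝ) : psiPrimitive C₁ C₂ (C₁ - u) = -psiPrimitive C₁ C₂ u := by
  have harcsin : (2 * (C₁ - u) - C₁) / C₁ = -((2 * u - C₁) / C₁) := by ring
  have harctan : C₂ * (C₁ - 2 * (C₁ - u)) / sqrtDisc C₁ C₂
      = -(C₂ * (C₁ - 2 * u) / sqrtDisc C₁ C₂) := by
    ring
  rw [psiPrimitive, psiPrimitive, harcsin, harctan, sub_sub_cancel, mul_comm (C₁ - u), neg_mul,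
    arcsin_neg, arctan_neg]
  ring

theorem tendsto_inv_sqrt_mul_sub_nhdsGT_zero {c : ℝ} (hc : 0 < c) :
    Tendsto (fun u => (√(u * (c - u)))⁻¹) (𝓝[>] 0) atTop := by
  refine tendsto_inv_nhdsGT_zero.comp (tendsto_nhdsWithin_iff.2 ⟨?_, ?_⟩)
  · simpa using ((by fun_prop : Continuous fun u : ℝ => √(u * (c - u))).tendsto 0).mono_left
      nhdsWithin_le_nhds
  · filter_upwards [Ioo_mem_nhdsGT hc] with u hu
    exact sqrt_pos.2 (mul_pos hu.1 (sub_pos.2 hu.2))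

theorem tendsto_psiPrimitive_nhdsGT_zero {C₁ C₂ : ℝ} (hC₁ : 0 < C₁) (hC₂ : 0 < C₂) :
    Tendsto (psiPrimitive C₁ C₂) (𝓝[>] 0) (𝓝 (C₂ ^ 2 / sqrtDisc C₁ C₂ - C₂ / 2)) := by
  have hs := sqrtDisc_pos (C₁ := C₁) hC₂.ne'
  have harcsin : Tendsto (fun u => arcsin ((2 * u - C₁) / C₁)) (𝓝[>] 0) (𝓝 (-(π / 2))) := by
    have h : Tendsto (fun u => arcsin ((2 * u - C₁) / C₁)) (𝓝[>] 0)
        (𝓝 (arcsin ((2 * 0 - C₁) / C₁))) :=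
      ((continuous_arcsin.comp (by fun_prop)).tendsto 0).mono_left nhdsWithin_le_nhds
    rwa [mul_zero, zero_sub, neg_div, div_self hC₁.ne', arcsin_neg_one] at h
  have hcoeff : Tendsto (fun u => C₂ * (C₁ - 2 * u) / sqrtDisc C₁ C₂) (𝓝[>] 0)
      (𝓝 (C₂ * C₁ / sqrtDisc C₁ C₂)) := by
    simpa using ((by fun_prop : Continuous fun u : ℝ => C₂ * (C₁ - 2 * u) / sqrtDisc C₁ C₂
      ).tendsto 0).mono_left nhdsWithin_le_nhds
  have harctan := (tendsto_arctan_atTop.mono_right nhdsWithin_le_nhds).comp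
    (hcoeff.pos_mul_atTop (by positivity) (tendsto_inv_sqrt_mul_sub_nhdsGT_zero hC₁))
  have hlimit : C₂ ^ 2 / sqrtDisc C₁ C₂ - C₂ / 2
      = C₂ / π * (-(π / 2) + 2 * C₂ / sqrtDisc C₁ C₂ * (π / 2)) := by
    field_simp
    ring
  rw [hlimit]
  exact (harcsin.add (harctan.const_mul (2 * C₂ / sqrtDisc C₁ C₂))).const_mul (C₂ / π)

theorem tendsto_psiPrimitive_nhdsLT {C₁ C₂ : ℝ} (hC₁ : 0 < C₁) (hC₂ : 0 < C₂) :
    Tendsto (psiPrimitive C₁ C₂) (𝓝[<] C₁) (𝓝 (C₂ / 2 - C₂ ^ 2 / sqrtDisc C₁ C₂)) := by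
  have hreflect : Tendsto (fun u => C₁ - u) (𝓝[<] C₁) (𝓝[>] 0) := by
    refine tendsto_nhdsWithin_iff.2 ⟨?_, ?_⟩
    · simpa using ((continuous_sub_left C₁).tendsto C₁).mono_left nhdsWithin_le_nhds
    · filter_upwards [self_mem_nhdsWithin] with u (hu : u < C₁) using sub_pos.2 hu
  convert ((tendsto_psiPrimitive_nhdsGT_zero hC₁ hC₂).comp hreflect).neg using 1
  · ext u
    simp only [Function.comp_apply, psiPrimitive_sub, neg_neg]
  · rw [neg_sub]

theorem integral_psi {C₁ C₂ : ℝ} (hC₁ : 0 < C₁) (hC₂ : 0 < C₂) :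
    ∫ u in 0..C₁, psi C₁ C₂ u = C₂ - 2 * C₂ ^ 2 / sqrtDisc C₁ C₂ := by
  rw [intervalIntegral.integral_eq_sub_of_hasDerivAt_of_tendsto hC₁
    (fun _ hx => hasDerivAt_psiPrimitive hx) (intervalIntegrable_psi hC₂.ne')
    (tendsto_psiPrimitive_nhdsGT_zero hC₁ hC₂) (tendsto_psiPrimitive_nhdsLT hC₁ hC₂)]
  ring

/-- The first moment of the representing measure dλ^D equals C₂² + C₁C₂/2. -/
theorem stmt6 (C₁ C₂ : ℝ) (hC₁ : 0 < C₁) (hC₂ : 0 < C₂) :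
    (∫ u in (0:ℝ)..C₁, u * psi C₁ C₂ u) + rres C₁ C₂ * xip C₁ C₂ =
      C₂ ^ 2 + C₁ * C₂ / 2 := by
  have hs := sqrtDisc_pos (C₁ := C₁) hC₂.ne'
  rw [integral_id_mul_of_symmetric (fun u => by rw [zero_add, psi_sub])
      (intervalIntegrable_psi hC₂.ne'), integral_psi hC₁ hC₂, rres_eq hC₂.le, xip_eq]
  field_simp
  ring
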